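/- Let D be a bounded domain in the plane and let A ⊆ D be measurable. For any bounded measurable function ω on D with 0 ≤ ω ≤ μ almost everywhere and ∫_D ω = 1, and any x ∈ ℝ², one has ∫_{B_{Rε}(x)} log(ε/|x−y|) ω(y) dy ≤ 1/2, where ε > 0 satisfies μπε² = 1 and R ≥ 1. -/

import Mathlib

open MeasureTheory Real

abbrev Plane := EuclideanSpace ℝ (Fin 2)

/-! Since `0 ≤ ω ≤ μ`, the integrand is at most `μ log⁺ (ε / ‖x - y‖)`, whose integral over the
whole plane is, in polar coordinates, `2πμ ∫₀^ε r log (ε / r) dr = μπε² / 2 = 1 / 2`. This is the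
value attained by the extremal density `ω = μ` on `B_ε(x)`. -/

open Set

lemma log_mul_le_mul_posLog {t w μ : ℝ} (hw₀ : 0 ≤ w) (hwμ : w ≤ μ) :
    log t * w ≤ μ * log⁺ t :=
  calc log t * w ≤ log⁺ t * w := by gcongr; exact le_max_right _ _
    _ ≤ log⁺ t * μ := by gcongr; exact posLog_nonneg
    _ = μ * log⁺ t := mul_comm _ _

section RadialProfile

variable {ε : ℝ}

lemma integral_mul_log_sub_mul_log (hε : 0 < ε) :
    ∫ r in (0 : ℝ)..ε, (r * log ε - r * log r) = ε ^ 2 / 4 := by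
  -- `r * (r * log r)` rather than `r ^ 2 * log r`: continuity at `0` is then `continuous_mul_log`
  let Φ : ℝ → ℝ := fun r => r ^ 2 / 2 * log ε - r * (r * log r) / 2 + r ^ 2 / 4
  have hΦ : Continuous Φ := by fun_prop
  have hderiv (r : ℝ) (hr : r ∈ Ioo 0 ε) : HasDerivAt Φ (r * log ε - r * log r) r := by
    have := ((((hasDerivAt_pow 2 r).div_const 2).mul_const (log ε)).sub
      (((hasDerivAt_id r).mul (hasDerivAt_mul_log hr.1.ne')).div_const 2)).add
      ((hasDerivAt_pow 2 r).div_const 4)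
    refine this.congr_deriv ?_
    simp only [id]
    ring
  rw [intervalIntegral.integral_eq_sub_of_hasDeriv_right_of_le hε.le hΦ.continuousOn
    (fun r hr => (hderiv r hr).hasDerivWithinAt)
    ((by fun_prop : Continuous _).intervalIntegrable _ _)]
  simp only [Φ]
  ring

lemma mul_posLog_div_eqOn_indicator (hε : 0 < ε) :
    EqOn (fun r => r * log⁺ (ε / r)) ((Ioc 0 ε).indicator fun r => r * log ε - r * log r)
      (Ioi 0) := by
  intro r (hr : 0 < r)
  have hεr : |ε / r| = ε / r := abs_of_pos (by positivity)
  dsimp only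
  by_cases hrε : r ≤ ε
  · rw [indicator_of_mem (show r ∈ Ioc 0 ε from ⟨hr, hrε⟩)]
    rw [posLog_eq_log (by rw [hεr]; exact (one_le_div hr).2 hrε), log_div hε.ne' hr.ne']
    ring
  · rw [indicator_of_notMem (fun h => hrε h.2)]
    rw [(posLog_eq_zero_iff _).2 (by rw [hεr]; exact (div_le_one hr).2 (not_le.1 hrε).le),
      mul_zero]

lemma integrableOn_mul_posLog_div (hε : 0 < ε) :
    IntegrableOn (fun r => r * log⁺ (ε / r)) (Ioi 0) := by
  rw [integrableOn_congr_fun (mul_posLog_div_eqOn_indicator hε) measurableSet_Ioi]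
  exact ((integrable_indicator_iff measurableSet_Ioc).2
    (by fun_prop : Continuous fun r => r * log ε - r * log r).integrableOn_Ioc).integrableOn

lemma integral_mul_posLog_div (hε : 0 < ε) :
    ∫ r in Ioi 0, r * log⁺ (ε / r) = ε ^ 2 / 4 := by
  rw [setIntegral_congr_fun measurableSet_Ioi (mul_posLog_div_eqOn_indicator hε),
    setIntegral_indicator measurableSet_Ioc, inter_eq_right.2 Ioc_subset_Ioi_self,
    ← intervalIntegral.integral_of_le hε.le, integral_mul_log_sub_mul_log hε]

lemma integrable_posLog_div_norm (hε : 0 < ε) : Integrable fun y : Plane => log⁺ (ε / ‖y‖) :=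
  (integrable_fun_norm_addHaar volume (f := fun r => log⁺ (ε / r))).2
    (by simpa using integrableOn_mul_posLog_div hε)

lemma integral_posLog_div_norm (hε : 0 < ε) : ∫ y : Plane, log⁺ (ε / ‖y‖) = π * ε ^ 2 / 2 := by
  rw [integral_fun_norm_addHaar volume (fun r => log⁺ (ε / r)), measureReal_def]
  simp only [finrank_euclideanSpace, Fintype.card_fin, EuclideanSpace.volume_ball_fin_two,
    ENNReal.ofReal_one, one_pow, one_mul, ENNReal.toReal_ofReal pi_nonneg, Nat.add_one_sub_one,
    pow_one, smul_eq_mul, integral_mul_posLog_div hε, nsmul_eq_mul, Nat.cast_ofNat]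
  ring

end RadialProfile

theorem stmt0_general (D : Set Plane)
    (μ ε R : ℝ) (hμ : 0 < μ) (hε : 0 < ε) (hεμ : μ * (π * ε ^ 2) = 1)
    (ω : Plane → ℝ)
    (hbound : ∀ᵐ y ∂(volume.restrict D), 0 ≤ ω y ∧ ω y ≤ μ)
    (x : Plane)
    (hint : IntegrableOn (fun y => Real.log (ε / ‖x - y‖) * ω y)
      (D ∩ Metric.ball x (R * ε))) :
    ∫ y in D ∩ Metric.ball x (R * ε), Real.log (ε / ‖x - y‖) * ω y ≤ 1 / 2 := by
  set g : Plane → ℝ := fun y => μ * log⁺ (ε / ‖x - y‖)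
  have hg : Integrable g :=
    ((integrable_comp_sub_left _ x).2 (integrable_posLog_div_norm hε)).const_mul μ
  have hle : ∀ᵐ y ∂volume.restrict (D ∩ Metric.ball x (R * ε)),
      Real.log (ε / ‖x - y‖) * ω y ≤ g y := by
    filter_upwards [ae_restrict_of_ae_restrict_of_subset inter_subset_left hbound]
      with y ⟨hω₀, hωμ⟩
    exact log_mul_le_mul_posLog hω₀ hωμ
  calc ∫ y in D ∩ Metric.ball x (R * ε), Real.log (ε / ‖x - y‖) * ω y
      ≤ ∫ y in D ∩ Metric.ball x (R * ε), g y := integral_mono_ae hint hg.integrableOn hle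
    _ ≤ ∫ y, g y := setIntegral_le_integral hg (.of_forall fun _ => mul_nonneg hμ.le posLog_nonneg)
    _ = μ * ∫ y : Plane, log⁺ (ε / ‖y‖) := by
      rw [integral_const_mul, integral_sub_left_eq_self (fun y : Plane => log⁺ (ε / ‖y‖))]
    _ = 1 / 2 := by rw [integral_posLog_div_norm hε, ← hεμ]; ring

/-- For any bounded measurable `ω` on a bounded measurable `D ⊆ ℝ²` with
`0 ≤ ω ≤ μ` a.e. and `∫_D ω = 1`, and any `x ∈ ℝ²`,
`∫_{B_{Rε}(x)} log (ε/|x-y|) ω(y) dy ≤ 1/2`, where `μπε² = 1` and `R ≥ 1`. -/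
theorem stmt0 (D A : Set Plane) (hD : MeasurableSet D) (hDb : Bornology.IsBounded D)
    (hA : MeasurableSet A) (hAD : A ⊆ D)
    (μ ε R : ℝ) (hμ : 0 < μ) (hε : 0 < ε) (hεμ : μ * (π * ε ^ 2) = 1) (hR : 1 ≤ R)
    (ω : Plane → ℝ) (hmeas : Measurable ω)
    (hbound : ∀ᵐ y ∂(volume.restrict D), 0 ≤ ω y ∧ ω y ≤ μ)
    (hmass : ∫ y in D, ω y = 1)
    (x : Plane)
    (hint : IntegrableOn (fun y => Real.log (ε / ‖x - y‖) * ω y)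
      (D ∩ Metric.ball x (R * ε))) :
    ∫ y in D ∩ Metric.ball x (R * ε), Real.log (ε / ‖x - y‖) * ω y ≤ 1 / 2 :=
  stmt0_general D μ ε R hμ hε hεμ ω hbound x hint
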